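/- The system of coefficients c*(μ;x) satisfies the dual monodromy conditions: whenever a partition μ has two distinct removable boxes, of (q,t)-contents x and y, so that μ − x, μ − y and μ − x − y are all partitions, then c*(μ;x)·c*(μ−x;y) / (c*(μ;y)·c*(μ−y;x)) = −(y−tx)(y−qx)(x−qty) / ((x−ty)(x−qy)(y−qtx)). -/

import Mathlib

/- Common setup: K = ℚ(q,t), Laurent polynomials in q,t, the Λ operation,
   partitions as antitone eventually-zero functions ℕ → ℕ (0-indexed rows:
   `f r` is the number of boxes in row `r+1`), the content sums B_λ, B*_λ,
   and the coefficients c(λ;x), c*(μ;x). -/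

noncomputable section

/-- The field ℚ(q,t). -/
abbrev Kq : Type := FractionRing (MvPolynomial (Fin 2) ℚ)

/-- The variable q ∈ ℚ(q,t). -/
def qv : Kq := algebraMap (MvPolynomial (Fin 2) ℚ) Kq (MvPolynomial.X 0)

/-- The variable t ∈ ℚ(q,t). -/
def tv : Kq := algebraMap (MvPolynomial (Fin 2) ℚ) Kq (MvPolynomial.X 1)

/-- Laurent polynomials in q,t with integer coefficients. -/
abbrev LP : Type := AddMonoidAlgebra ℤ (ℤ × ℤ)

/-- The monomial q^a t^b as a Laurent polynomial. -/
def mono (a b : ℤ) : LP := AddMonoidAlgebra.single (a, b) 1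

/-- Λ(Σ φ_{a,b} q^a t^b) := ∏_{(a,b)≠(0,0)} (1 − q^a t^b)^{φ_{a,b}}. -/
def Lam (f : LP) : Kq :=
  ∏ p ∈ f.coeff.support.erase (0, 0),
    (1 - qv ^ p.1 * tv ^ p.2) ^ (f.coeff p)

/-- B_λ: the sum of the (q,t)-contents of the boxes of λ (the box in
0-indexed row r and 0-indexed column c contributes the monomial q^c t^r). -/
def Bl (f : ℕ → ℕ) : LP :=
  ∑ᶠ r : ℕ, ∑ c ∈ Finset.range (f r), mono (c : ℤ) (r : ℤ)

/-- B*_λ: the sum of the inverse (q,t)-contents of the boxes of λ. -/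
def Bs (f : ℕ → ℕ) : LP :=
  ∑ᶠ r : ℕ, ∑ c ∈ Finset.range (f r), mono (-(c : ℤ)) (-(r : ℤ))

/-- c(λ;x) := −Λ(−x^{−1} + (1−q)(1−t) B_λ x^{−1} + 1), where x = q^a t^b is
the content of the added box. -/
def cc (f : ℕ → ℕ) (a b : ℤ) : Kq :=
  -Lam (-(mono (-a) (-b)) + (1 - mono 1 0) * (1 - mono 0 1) * Bl f * mono (-a) (-b) + 1)

/-- c*(μ;x) := x^{−1} Λ(−(1−q)(1−t) B*_λ x), where μ = λ ∪ x and x = q^a t^b is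
the content of the added box; here the argument `f` is λ = μ − x. -/
def ccs (f : ℕ → ℕ) (a b : ℤ) : Kq :=
  (qv ^ a * tv ^ b)⁻¹ * Lam (-((1 - mono 1 0) * (1 - mono 0 1) * Bs f * mono a b))

/-- The partition μ − x, where x is the removable box of μ in row i (1-based). -/
def remRow (f : ℕ → ℕ) (i : ℕ) : ℕ → ℕ := Function.update f (i - 1) (f (i - 1) - 1)

lemma qv_ne_zero : qv ≠ 0 := by
  simp [qv, map_ne_zero_iff _ (IsFractionRing.injective (MvPolynomial (Fin 2) ℚ) Kq),
    MvPolynomial.X_ne_zero]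

lemma tv_ne_zero : tv ≠ 0 := by
  simp [tv, map_ne_zero_iff _ (IsFractionRing.injective (MvPolynomial (Fin 2) ℚ) Kq),
    MvPolynomial.X_ne_zero]

lemma qt_pow_ne_one {a b : ℤ} (h : ¬(a = 0 ∧ b = 0)) : qv ^ a * tv ^ b ≠ 1 := by
  intro hab
  set n := a.natAbs with hn
  set m := b.natAbs with hm
  have hq := qv_ne_zero
  have ht := tv_ne_zero
  have key : qv ^ ((a + n).toNat) * tv ^ ((b + m).toNat) = qv ^ n * tv ^ m := by
    have h1 : (qv ^ a * tv ^ b) * (qv ^ (n:ℤ) * tv ^ (m:ℤ)) = qv ^ (n:ℤ) * tv ^ (m:ℤ) := by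
      rw [hab, one_mul]
    have h2 : qv ^ ((a + n : ℤ)) * tv ^ ((b + m : ℤ)) = qv ^ (n:ℤ) * tv ^ (m:ℤ) := by
      rw [zpow_add₀ hq, zpow_add₀ ht]; ring_nf; ring_nf at h1; linear_combination h1
    rw [← zpow_natCast qv ((a+(n:ℤ)).toNat), ← zpow_natCast tv ((b+(m:ℤ)).toNat),
      ← zpow_natCast qv n, ← zpow_natCast tv m,
      Int.toNat_of_nonneg (show (0:ℤ) ≤ a + n by omega),
      Int.toNat_of_nonneg (show (0:ℤ) ≤ b + m by omega)]
    exact h2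
  -- transfer to MvPolynomial
  have inj := IsFractionRing.injective (MvPolynomial (Fin 2) ℚ) Kq
  have key2 : (MvPolynomial.X 0 : MvPolynomial (Fin 2) ℚ) ^ ((a + n).toNat) * MvPolynomial.X 1 ^ ((b + m).toNat)
      = MvPolynomial.X 0 ^ n * MvPolynomial.X 1 ^ m := by
    apply inj
    simpa [qv, tv, map_mul, map_pow] using key
  rw [MvPolynomial.X_pow_eq_monomial, MvPolynomial.X_pow_eq_monomial,
    MvPolynomial.X_pow_eq_monomial, MvPolynomial.X_pow_eq_monomial,
    MvPolynomial.monomial_mul, MvPolynomial.monomial_mul] at key2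
  have hexp : Finsupp.single (0 : Fin 2) ((a + n).toNat) + Finsupp.single 1 ((b + m).toNat)
      = Finsupp.single (0 : Fin 2) n + Finsupp.single 1 m := by
    rw [mul_one] at key2
    exact MvPolynomial.monomial_left_injective (one_ne_zero (α := ℚ)) key2
  have e0 := DFunLike.congr_fun hexp 0
  have e1 := DFunLike.congr_fun hexp 1
  simp [Finsupp.single_apply] at e0 e1
  omega

lemma base_ne_zero {p : ℤ × ℤ} (hp : p ≠ (0,0)) : (1 : Kq) - qv ^ p.1 * tv ^ p.2 ≠ 0 := by
  intro h
  apply qt_pow_ne_one (a := p.1) (b := p.2)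
  · intro ⟨h1, h2⟩; apply hp; ext <;> simp [h1, h2]
  · linear_combination -h

lemma Lam_eq_prod (f : LP) (S : Finset (ℤ × ℤ)) (hS : f.coeff.support ⊆ S) :
    Lam f = ∏ p ∈ S.erase (0,0), (1 - qv ^ p.1 * tv ^ p.2) ^ (f.coeff p) := by
  unfold Lam
  apply Finset.prod_subset (Finset.erase_subset_erase _ hS)
  intro p _ hnp
  have : f.coeff p = 0 := by
    by_contra hc
    exact hnp (Finset.mem_erase.mpr ⟨by rintro rfl; exact hnp (by simp_all [Finsupp.mem_support_iff]), Finsupp.mem_support_iff.mpr hc⟩)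
  simp [this]

lemma Lam_add (f g : LP) : Lam (f + g) = Lam f * Lam g := by
  classical
  set S := f.coeff.support ∪ g.coeff.support with hSdef
  have hf : f.coeff.support ⊆ S := Finset.subset_union_left
  have hg : g.coeff.support ⊆ S := Finset.subset_union_right
  have hfg : (f + g : LP).coeff.support ⊆ S := Finsupp.support_add
  rw [Lam_eq_prod f S hf, Lam_eq_prod g S hg, Lam_eq_prod (f+g) S hfg, ← Finset.prod_mul_distrib]
  apply Finset.prod_congr rfl
  intro p hp
  have hp0 : p ≠ (0,0) := (Finset.mem_erase.mp hp).1
  have hadd : (f + g : LP).coeff p = f.coeff p + g.coeff p := rfl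
  rw [hadd, zpow_add₀ (base_ne_zero hp0)]

lemma Lam_zero : Lam 0 = 1 := by simp [Lam]

lemma Lam_neg (f : LP) : Lam (-f) = (Lam f)⁻¹ := by
  have h : Lam f * Lam (-f) = 1 := by rw [← Lam_add]; simp [Lam_zero]
  exact eq_inv_of_mul_eq_one_right (by linear_combination h)

lemma Lam_ne_zero (f : LP) : Lam f ≠ 0 := by
  unfold Lam
  apply Finset.prod_ne_zero_iff.mpr
  intro p hp
  exact zpow_ne_zero _ (base_ne_zero (Finset.mem_erase.mp hp).1)

lemma Lam_mono {a b : ℤ} (h : ¬(a = 0 ∧ b = 0)) : Lam (mono a b) = 1 - qv ^ a * tv ^ b := by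
  have hne : ((a,b) : ℤ × ℤ) ≠ (0,0) := by intro hc; apply h; constructor <;> simp_all [Prod.ext_iff]
  have hsupp : (mono a b : LP).coeff.support = {(a,b)} := Finsupp.support_single_ne_zero _ one_ne_zero
  unfold Lam
  rw [hsupp]
  rw [Finset.erase_eq_of_notMem (by simpa [eq_comm] using hne)]
  simp [mono, AddMonoidAlgebra.coeff_single, Finsupp.single_apply]

lemma mono_mul (a b c d : ℤ) : mono a b * mono c d = mono (a+c) (b+d) := by
  unfold mono
  have := AddMonoidAlgebra.single_mul_single (R := ℤ) (M := ℤ × ℤ) (m₁ := (a,b)) (m₂ := (c,d)) (r₁ := (1:ℤ)) (r₂ := (1:ℤ))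
  simpa using this

lemma Bs_eq_sum (f : ℕ → ℕ) (M : ℕ) (h : ∀ n, M ≤ n → f n = 0) :
    Bs f = ∑ r ∈ Finset.range M, ∑ c ∈ Finset.range (f r), mono (-(c : ℤ)) (-(r : ℤ)) := by
  apply finsum_eq_finset_sum_of_support_subset
  intro r hr
  simp only [Function.mem_support] at hr
  by_contra hc
  simp only [Finset.coe_range, Set.mem_Iio, not_lt] at hc
  rw [h r hc] at hr
  simp at hr

lemma Bs_update (g : ℕ → ℕ) (r₀ : ℕ) (hfin : ∃ M, ∀ n, M ≤ n → g n = 0) :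
    Bs (Function.update g r₀ (g r₀ + 1)) = Bs g + mono (-(g r₀ : ℤ)) (-(r₀ : ℤ)) := by
  obtain ⟨M, hM⟩ := hfin
  set M' := max M (r₀ + 1) with hM'
  have hM2 : ∀ n, M' ≤ n → g n = 0 := fun n hn => hM n (le_trans (le_max_left _ _) hn)
  have hM3 : ∀ n, M' ≤ n → Function.update g r₀ (g r₀ + 1) n = 0 := by
    intro n hn
    rw [Function.update_of_ne (by omega)]
    exact hM2 n hn
  have hr0 : r₀ ∈ Finset.range M' := Finset.mem_range.mpr (by omega)
  rw [Bs_eq_sum _ M' hM3, Bs_eq_sum g M' hM2,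
    Finset.sum_eq_sum_sdiff_singleton_add hr0, Finset.sum_eq_sum_sdiff_singleton_add hr0
      (fun r => ∑ c ∈ Finset.range (g r), mono (-(c : ℤ)) (-(r : ℤ)))]
  have hcong : ∑ r ∈ Finset.range M' \ {r₀}, ∑ c ∈ Finset.range (Function.update g r₀ (g r₀ + 1) r), mono (-(c : ℤ)) (-(r : ℤ))
      = ∑ r ∈ Finset.range M' \ {r₀}, ∑ c ∈ Finset.range (g r), mono (-(c : ℤ)) (-(r : ℤ)) := by
    apply Finset.sum_congr rfl
    intro r hr
    have hrne : r ≠ r₀ := by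
      have := Finset.mem_sdiff.mp hr
      simpa using this.2
    rw [Function.update_of_ne hrne]
  rw [hcong, Function.update_self, Finset.sum_range_succ]
  ring

lemma one_eq_mono : (1 : LP) = mono 0 0 := by rw [mono]; exact AddMonoidAlgebra.one_def

lemma w_mono (a b : ℤ) : (1 - mono 1 0) * (1 - mono 0 1) * mono a b
    = mono a b - mono (a+1) b - mono a (b+1) + mono (a+1) (b+1) := by
  have e1 : mono 1 0 * mono a b = mono (a+1) b := by rw [mono_mul]; congr 1 <;> ring
  have e2 : mono 0 1 * mono a b = mono a (b+1) := by rw [mono_mul]; congr 1 <;> ring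
  have e3 : mono 1 0 * mono 0 1 * mono a b = mono (a+1) (b+1) := by
    rw [mono_mul, mono_mul]; congr 1 <;> ring
  linear_combination -e1 - e2 + e3

lemma Lam_w_mono (a b : ℤ) (h1 : ¬(a = 0 ∧ b = 0)) (h2 : ¬(a+1 = 0 ∧ b = 0))
    (h3 : ¬(a = 0 ∧ b+1 = 0)) (h4 : ¬(a+1 = 0 ∧ b+1 = 0)) :
    Lam (-((1 - mono 1 0) * (1 - mono 0 1) * mono a b))
    = (1 - qv ^ a * tv ^ b)⁻¹ * (1 - qv ^ (a+1) * tv ^ b) * (1 - qv ^ a * tv ^ (b+1))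
        * (1 - qv ^ (a+1) * tv ^ (b+1))⁻¹ := by
  rw [w_mono]
  have : -(mono a b - mono (a+1) b - mono a (b+1) + mono (a+1) (b+1))
      = -(mono a b) + mono (a+1) b + (mono a (b+1) + -(mono (a+1) (b+1))) := by ring
  rw [this, Lam_add, Lam_add, Lam_add, Lam_neg, Lam_neg,
    Lam_mono h1, Lam_mono h2, Lam_mono h3, Lam_mono h4]
  ring

set_option maxHeartbeats 1000000 in
lemma final {K : Type*} [Field K] (q t u v : K) (hu : u ≠ 0) (hv : v ≠ 0)
    (h1 : 1 - u*v⁻¹ ≠ 0) (h2 : 1 - q*(u*v⁻¹) ≠ 0) (h3 : 1 - t*(u*v⁻¹) ≠ 0)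
    (h4 : 1 - q*t*(u*v⁻¹) ≠ 0)
    (h5 : 1 - v*u⁻¹ ≠ 0) (h6 : 1 - q*(v*u⁻¹) ≠ 0) (h7 : 1 - t*(v*u⁻¹) ≠ 0)
    (h8 : 1 - q*t*(v*u⁻¹) ≠ 0) :
    ((1 - u*v⁻¹)⁻¹ * (1 - q*(u*v⁻¹)) * (1 - t*(u*v⁻¹)) * (1 - q*t*(u*v⁻¹))⁻¹) /
      ((1 - v*u⁻¹)⁻¹ * (1 - q*(v*u⁻¹)) * (1 - t*(v*u⁻¹)) * (1 - q*t*(v*u⁻¹))⁻¹)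
    = -((v - t*u) * (v - q*u) * (u - q*t*v)) / ((u - t*v) * (u - q*v) * (v - q*t*u)) := by
  have s1 : 1 - u*v⁻¹ = (v - u) * v⁻¹ := by field_simp
  have s2 : 1 - q*(u*v⁻¹) = (v - q*u) * v⁻¹ := by field_simp
  have s3 : 1 - t*(u*v⁻¹) = (v - t*u) * v⁻¹ := by field_simp
  have s4 : 1 - q*t*(u*v⁻¹) = (v - q*t*u) * v⁻¹ := by field_simp
  have s5 : 1 - v*u⁻¹ = (u - v) * u⁻¹ := by field_simp
  have s6 : 1 - q*(v*u⁻¹) = (u - q*v) * u⁻¹ := by field_simp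
  have s7 : 1 - t*(v*u⁻¹) = (u - t*v) * u⁻¹ := by field_simp
  have s8 : 1 - q*t*(v*u⁻¹) = (u - q*t*v) * u⁻¹ := by field_simp
  have d1 : v - u ≠ 0 := fun h => h1 (by rw [s1, h, zero_mul])
  have d2 : v - q*u ≠ 0 := fun h => h2 (by rw [s2, h, zero_mul])
  have d3 : v - t*u ≠ 0 := fun h => h3 (by rw [s3, h, zero_mul])
  have d4 : v - q*t*u ≠ 0 := fun h => h4 (by rw [s4, h, zero_mul])
  have d5 : u - v ≠ 0 := fun h => h5 (by rw [s5, h, zero_mul])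
  have d6 : u - q*v ≠ 0 := fun h => h6 (by rw [s6, h, zero_mul])
  have d7 : u - t*v ≠ 0 := fun h => h7 (by rw [s7, h, zero_mul])
  have d8 : u - q*t*v ≠ 0 := fun h => h8 (by rw [s8, h, zero_mul])
  have hB : (1 - v*u⁻¹)⁻¹ * (1 - q*(v*u⁻¹)) * (1 - t*(v*u⁻¹)) * (1 - q*t*(v*u⁻¹))⁻¹ ≠ 0 :=
    mul_ne_zero (mul_ne_zero (mul_ne_zero (inv_ne_zero h5) h6) h7) (inv_ne_zero h8)
  have hD : (u - t*v) * (u - q*v) * (v - q*t*u) ≠ 0 :=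
    mul_ne_zero (mul_ne_zero d7 d6) d4
  rw [div_eq_div_iff hB hD, s1, s2, s3, s4, s5, s6, s7, s8]
  simp only [mul_inv, inv_inv]
  have d4' : v - u*q*t ≠ 0 := by rwa [show u*q*t = q*t*u by ring]
  have d8' : u - v*q*t ≠ 0 := by rwa [show v*q*t = q*t*v by ring]
  field_simp
  ring


lemma one_sub_ne {a b : ℤ} (h : ¬(a = 0 ∧ b = 0)) : (1 : Kq) - qv ^ a * tv ^ b ≠ 0 :=
  base_ne_zero (p := (a, b)) (fun hc => h ⟨congrArg Prod.fst hc, congrArg Prod.snd hc⟩)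

lemma Lam_split (B : LP) (a b c d : ℤ) :
    Lam (-((1 - mono 1 0) * (1 - mono 0 1) * (B + mono (-a) (-b)) * mono c d))
    = Lam (-((1 - mono 1 0) * (1 - mono 0 1) * B * mono c d))
      * Lam (-((1 - mono 1 0) * (1 - mono 0 1) * mono (c - a) (d - b))) := by
  rw [← Lam_add]
  congr 1
  have hm : mono (-a) (-b) * mono c d = mono (c - a) (d - b) := by
    rw [mono_mul]; congr 1 <;> ring
  linear_combination (-((1 - mono 1 0) * (1 - mono 0 1))) * hm

lemma reduce {K : Type*} [Field K] (a b c d e g : K) (ha : a ≠ 0) (hb : b ≠ 0)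
    (hc : c ≠ 0) (hd : d ≠ 0) (hg : g ≠ 0) :
    (a⁻¹ * (c * e) * (b⁻¹ * d)) / (b⁻¹ * (d * g) * (a⁻¹ * c)) = e / g := by
  rw [div_eq_div_iff (mul_ne_zero (mul_ne_zero (inv_ne_zero hb) (mul_ne_zero hd hg)) (mul_ne_zero (inv_ne_zero ha) hc)) hg]
  ring

/-- dual monodromy conditions for c*(μ;x). -/
theorem stmt4 (f : ℕ → ℕ) (hant : Antitone f) (hfin : ∃ M, ∀ n, M ≤ n → f n = 0)
    (i j : ℕ) (hi : 1 ≤ i) (hj : 1 ≤ j) (hij : i ≠ j)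
    -- x is the removable box of μ in row i, y the removable box in row j
    -- (so μ − x, μ − y and μ − x − y are all partitions); the content of x is
    -- q^{μ_i − 1} t^{i−1} and that of y is q^{μ_j − 1} t^{j−1}:
    (hremi : f i < f (i - 1)) (hremj : f j < f (j - 1)) :
    (ccs (remRow f i) ((f (i - 1) : ℤ) - 1) ((i : ℤ) - 1) *
        ccs (remRow (remRow f i) j) ((f (j - 1) : ℤ) - 1) ((j : ℤ) - 1)) /
      (ccs (remRow f j) ((f (j - 1) : ℤ) - 1) ((j : ℤ) - 1) *
        ccs (remRow (remRow f j) i) ((f (i - 1) : ℤ) - 1) ((i : ℤ) - 1)) =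
    -(((qv ^ ((f (j - 1) : ℤ) - 1) * tv ^ ((j : ℤ) - 1)) - tv * (qv ^ ((f (i - 1) : ℤ) - 1) * tv ^ ((i : ℤ) - 1))) *
       ((qv ^ ((f (j - 1) : ℤ) - 1) * tv ^ ((j : ℤ) - 1)) - qv * (qv ^ ((f (i - 1) : ℤ) - 1) * tv ^ ((i : ℤ) - 1))) *
       ((qv ^ ((f (i - 1) : ℤ) - 1) * tv ^ ((i : ℤ) - 1)) - qv * tv * (qv ^ ((f (j - 1) : ℤ) - 1) * tv ^ ((j : ℤ) - 1)))) /
     (((qv ^ ((f (i - 1) : ℤ) - 1) * tv ^ ((i : ℤ) - 1)) - tv * (qv ^ ((f (j - 1) : ℤ) - 1) * tv ^ ((j : ℤ) - 1))) *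
       ((qv ^ ((f (i - 1) : ℤ) - 1) * tv ^ ((i : ℤ) - 1)) - qv * (qv ^ ((f (j - 1) : ℤ) - 1) * tv ^ ((j : ℤ) - 1))) *
       ((qv ^ ((f (j - 1) : ℤ) - 1) * tv ^ ((j : ℤ) - 1)) - qv * tv * (qv ^ ((f (i - 1) : ℤ) - 1) * tv ^ ((i : ℤ) - 1)))) := by
  obtain ⟨M, hM⟩ := hfin
  have hi1j1 : i - 1 ≠ j - 1 := by omega
  have hvj : remRow f i (j - 1) = f (j - 1) := Function.update_of_ne (Ne.symm hi1j1) _ f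
  have hvi : remRow f j (i - 1) = f (i - 1) := Function.update_of_ne hi1j1 _ f
  have hgj : remRow (remRow f i) j (j - 1) = f (j - 1) - 1 := by
    show Function.update (remRow f i) (j - 1) (remRow f i (j - 1) - 1) (j - 1) = _
    rw [Function.update_self, hvj]
  have hgi : remRow (remRow f i) j (i - 1) = f (i - 1) - 1 := by
    show Function.update (remRow f i) (j - 1) (remRow f i (j - 1) - 1) (i - 1) = _
    rw [Function.update_of_ne hi1j1]
    show Function.update f (i - 1) (f (i - 1) - 1) (i - 1) = _
    rw [Function.update_self]
  have hcomm : remRow (remRow f j) i = remRow (remRow f i) j := by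
    show Function.update (remRow f j) (i - 1) (remRow f j (i - 1) - 1)
        = Function.update (remRow f i) (j - 1) (remRow f i (j - 1) - 1)
    rw [hvi, hvj]
    exact Function.update_comm (Ne.symm hi1j1) (f (j - 1) - 1) (f (i - 1) - 1) f
  have hfin1 : ∀ n, M ≤ n → remRow f i n = 0 := by
    intro n hn
    show Function.update f (i - 1) (f (i - 1) - 1) n = 0
    rcases eq_or_ne n (i - 1) with rfl | h
    · rw [Function.update_self, hM _ hn]
    · rw [Function.update_of_ne h, hM _ hn]
  have hfing : ∀ n, M ≤ n → remRow (remRow f i) j n = 0 := by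
    intro n hn
    show Function.update (remRow f i) (j - 1) (remRow f i (j - 1) - 1) n = 0
    rcases eq_or_ne n (j - 1) with rfl | h
    · rw [Function.update_self, hvj, hM _ hn]
    · rw [Function.update_of_ne h, hfin1 _ hn]
  have hf1 : 1 ≤ f (j - 1) := by omega
  have hf2 : 1 ≤ f (i - 1) := by omega
  have hadd1 : Function.update (remRow (remRow f i) j) (j - 1)
      (remRow (remRow f i) j (j - 1) + 1) = remRow f i := by
    funext n
    rcases eq_or_ne n (j - 1) with rfl | h
    · rw [Function.update_self, hgj, hvj]
      omega
    · rw [Function.update_of_ne h]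
      show Function.update (remRow f i) (j - 1) (remRow f i (j - 1) - 1) n = _
      rw [Function.update_of_ne h]
  have hadd2 : Function.update (remRow (remRow f i) j) (i - 1)
      (remRow (remRow f i) j (i - 1) + 1) = remRow f j := by
    funext n
    rcases eq_or_ne n (i - 1) with rfl | h
    · rw [Function.update_self, hgi, hvi]
      omega
    · rw [Function.update_of_ne h]
      rcases eq_or_ne n (j - 1) with rfl | h2
      · rw [hgj]
        show _ = Function.update f (j - 1) (f (j - 1) - 1) (j - 1)
        rw [Function.update_self]
      · show Function.update (remRow f i) (j - 1) (remRow f i (j - 1) - 1) n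
            = Function.update f (j - 1) (f (j - 1) - 1) n
        rw [Function.update_of_ne h2, Function.update_of_ne h2]
        show Function.update f (i - 1) (f (i - 1) - 1) n = f n
        rw [Function.update_of_ne h]
  have hneq : f (i - 1) ≠ f (j - 1) := by
    rcases lt_or_gt_of_ne hij with h | h
    · have h1 : f (j - 1) ≤ f i := hant (by omega)
      omega
    · have h1 : f (i - 1) ≤ f j := hant (by omega)
      omega
  have hadj1 : j = i + 1 → f (j - 1) ≤ f (i - 1) := by
    intro h
    have hh : j - 1 = i := by omega
    rw [hh]
    exact le_of_lt hremi
  have hadj2 : i = j + 1 → f (i - 1) ≤ f (j - 1) := by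
    intro h
    have hh : i - 1 = j := by omega
    rw [hh]
    exact le_of_lt hremj
  set ax : ℤ := (f (i - 1) : ℤ) - 1 with hax
  set bx : ℤ := (i : ℤ) - 1 with hbx
  set ay : ℤ := (f (j - 1) : ℤ) - 1 with hay
  set by_ : ℤ := (j : ℤ) - 1 with hby
  have hA : ax - ay ≠ 0 := by omega
  have hB : bx - by_ ≠ 0 := by omega
  have hC : ¬(ax - ay + 1 = 0 ∧ bx - by_ + 1 = 0) := by
    rintro ⟨h1, h2⟩
    have := hadj2 (by omega)
    omega
  have hD : ¬(ay - ax + 1 = 0 ∧ by_ - bx + 1 = 0) := by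
    rintro ⟨h1, h2⟩
    have := hadj1 (by omega)
    omega
  have hBs1 : Bs (remRow f i) = Bs (remRow (remRow f i) j) + mono (-ay) (-by_) := by
    have h := Bs_update (remRow (remRow f i) j) (j - 1) ⟨M, hfing⟩
    rw [hadd1, hgj] at h
    rw [h]
    congr 2 <;> omega
  have hBs2 : Bs (remRow f j) = Bs (remRow (remRow f i) j) + mono (-ax) (-bx) := by
    have h := Bs_update (remRow (remRow f i) j) (i - 1) ⟨M, hfing⟩
    rw [hadd2, hgi] at h
    rw [h]
    congr 2 <;> omega
  simp only [ccs]
  rw [hcomm, hBs1, hBs2, Lam_split, Lam_split]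
  set u : Kq := qv ^ ax * tv ^ bx with hu_def
  set v : Kq := qv ^ ay * tv ^ by_ with hv_def
  have hu : u ≠ 0 := mul_ne_zero (zpow_ne_zero _ qv_ne_zero) (zpow_ne_zero _ tv_ne_zero)
  have hv : v ≠ 0 := mul_ne_zero (zpow_ne_zero _ qv_ne_zero) (zpow_ne_zero _ tv_ne_zero)
  rw [reduce u v _ _ _ _ hu hv (Lam_ne_zero _) (Lam_ne_zero _) (Lam_ne_zero _)]
  have r1 : qv ^ (ax - ay) * tv ^ (bx - by_) = u * v⁻¹ := by
    rw [hu_def, hv_def, zpow_sub₀ qv_ne_zero, zpow_sub₀ tv_ne_zero, div_mul_div_comm,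
      div_eq_mul_inv]
  have r2 : qv ^ (ax - ay + 1) * tv ^ (bx - by_) = qv * (u * v⁻¹) := by
    rw [zpow_add_one₀ qv_ne_zero]
    linear_combination qv * r1
  have r3 : qv ^ (ax - ay) * tv ^ (bx - by_ + 1) = tv * (u * v⁻¹) := by
    rw [zpow_add_one₀ tv_ne_zero]
    linear_combination tv * r1
  have r4 : qv ^ (ax - ay + 1) * tv ^ (bx - by_ + 1) = qv * tv * (u * v⁻¹) := by
    rw [zpow_add_one₀ qv_ne_zero, zpow_add_one₀ tv_ne_zero]
    linear_combination qv * tv * r1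
  have r5 : qv ^ (ay - ax) * tv ^ (by_ - bx) = v * u⁻¹ := by
    rw [hu_def, hv_def, zpow_sub₀ qv_ne_zero, zpow_sub₀ tv_ne_zero, div_mul_div_comm,
      div_eq_mul_inv]
  have r6 : qv ^ (ay - ax + 1) * tv ^ (by_ - bx) = qv * (v * u⁻¹) := by
    rw [zpow_add_one₀ qv_ne_zero]
    linear_combination qv * r5
  have r7 : qv ^ (ay - ax) * tv ^ (by_ - bx + 1) = tv * (v * u⁻¹) := by
    rw [zpow_add_one₀ tv_ne_zero]
    linear_combination tv * r5
  have r8 : qv ^ (ay - ax + 1) * tv ^ (by_ - bx + 1) = qv * tv * (v * u⁻¹) := by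
    rw [zpow_add_one₀ qv_ne_zero, zpow_add_one₀ tv_ne_zero]
    linear_combination qv * tv * r5
  have eQ1 : Lam (-((1 - mono 1 0) * (1 - mono 0 1) * mono (ax - ay) (bx - by_)))
      = (1 - u * v⁻¹)⁻¹ * (1 - qv * (u * v⁻¹)) * (1 - tv * (u * v⁻¹))
        * (1 - qv * tv * (u * v⁻¹))⁻¹ := by
    rw [Lam_w_mono (ax - ay) (bx - by_) (fun h => hA h.1) (fun h => hB h.2)
      (fun h => hA h.1) hC, r1, r2, r3, r4]
  have eQ2 : Lam (-((1 - mono 1 0) * (1 - mono 0 1) * mono (ay - ax) (by_ - bx)))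
      = (1 - v * u⁻¹)⁻¹ * (1 - qv * (v * u⁻¹)) * (1 - tv * (v * u⁻¹))
        * (1 - qv * tv * (v * u⁻¹))⁻¹ := by
    rw [Lam_w_mono (ay - ax) (by_ - bx) (fun h => hA (by omega)) (fun h => hB (by omega))
      (fun h => hA (by omega)) hD, r5, r6, r7, r8]
  have h1 : 1 - u * v⁻¹ ≠ 0 := by rw [← r1]; exact one_sub_ne (fun h => hA h.1)
  have h2 : 1 - qv * (u * v⁻¹) ≠ 0 := by rw [← r2]; exact one_sub_ne (fun h => hB h.2)
  have h3 : 1 - tv * (u * v⁻¹) ≠ 0 := by rw [← r3]; exact one_sub_ne (fun h => hA h.1)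
  have h4 : 1 - qv * tv * (u * v⁻¹) ≠ 0 := by rw [← r4]; exact one_sub_ne hC
  have h5 : 1 - v * u⁻¹ ≠ 0 := by rw [← r5]; exact one_sub_ne (fun h => hA (by omega))
  have h6 : 1 - qv * (v * u⁻¹) ≠ 0 := by rw [← r6]; exact one_sub_ne (fun h => hB (by omega))
  have h7 : 1 - tv * (v * u⁻¹) ≠ 0 := by rw [← r7]; exact one_sub_ne (fun h => hA (by omega))
  have h8 : 1 - qv * tv * (v * u⁻¹) ≠ 0 := by rw [← r8]; exact one_sub_ne hD
  rw [eQ1, eQ2]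
  exact final qv tv u v hu hv h1 h2 h3 h4 h5 h6 h7 h8

end
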